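/- For all $x > 0$, $\frac{x^2 + 12}{12 x^4 (x+1)^2} < [\psi'(x)]^2 + \psi''(x) < \frac{x + 12}{12 x^4 (x+1)}$. -/

import Mathlib

noncomputable def digamma : ℝ → ℝ := deriv (fun x => Real.log (Real.Gamma x))

open Filter Topology Finset Real

namespace PsiAux



/-- trigamma as a series -/
noncomputable def tri (x : ℝ) : ℝ := ∑' n : ℕ, 1 / (x + n) ^ 2
noncomputable def S3 (x : ℝ) : ℝ := ∑' n : ℕ, 1 / (x + n) ^ 3

lemma den_pos {z : ℝ} (hz : 0 < z) (n : ℕ) : 0 < z + n := by positivity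

lemma den_ge {z : ℝ} (hz : 0 < z) (n : ℕ) : z / (z + 1) * (n + 1) ≤ z + n := by
  rw [div_mul_eq_mul_div, div_le_iff₀ (by positivity)]
  nlinarith [sq_nonneg z, (Nat.cast_nonneg n : (0:ℝ) ≤ n)]

lemma summable_aux {z : ℝ} (hz : 0 < z) (p : ℕ) (hp : 2 ≤ p) :
    Summable (fun n : ℕ => 1 / (z + n) ^ p) := by
  have hbase : Summable (fun n : ℕ => 1 / ((n : ℝ) + 1) ^ p) := by
    have := (summable_nat_add_iff (f := fun n : ℕ => 1 / (n : ℝ) ^ p) 1).2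
      (Real.summable_one_div_nat_pow.2 hp)
    simpa using this
  apply Summable.of_nonneg_of_le (fun n => by positivity)
    (fun n => ?_) (hbase.mul_left (((z+1)/z) ^ p))
  have h1 : z / (z + 1) * (n + 1) ≤ z + n := den_ge hz n
  have h2 : 0 < z / (z + 1) * ((n : ℝ) + 1) := by positivity
  calc (1 : ℝ) / (z + n) ^ p ≤ 1 / (z / (z + 1) * (n + 1)) ^ p := by
        apply one_div_le_one_div_of_le (by positivity)
        exact pow_le_pow_left₀ h2.le h1 p
    _ = ((z + 1) / z) ^ p * (1 / ((n:ℝ) + 1) ^ p) := by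
        rw [mul_pow, one_div, mul_inv, ← inv_pow, inv_div, one_div]

lemma summable_tri {z : ℝ} (hz : 0 < z) : Summable (fun n : ℕ => 1 / (z + n) ^ 2) :=
  summable_aux hz 2 le_rfl

lemma summable_S3 {z : ℝ} (hz : 0 < z) : Summable (fun n : ℕ => 1 / (z + n) ^ 3) :=
  summable_aux hz 3 (by norm_num)

lemma tri_rec {x : ℝ} (hx : 0 < x) : tri x = 1 / x ^ 2 + tri (x + 1) := by
  rw [tri, Summable.tsum_eq_zero_add (summable_tri hx)]
  congr 1
  · norm_num
  · rw [tri]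
    apply tsum_congr
    intro n
    push_cast
    ring_nf

lemma S3_rec {x : ℝ} (hx : 0 < x) : S3 x = 1 / x ^ 3 + S3 (x + 1) := by
  rw [S3, Summable.tsum_eq_zero_add (summable_S3 hx)]
  congr 1
  · norm_num
  · rw [S3]
    apply tsum_congr
    intro n
    push_cast
    ring_nf

lemma tri_nonneg {x : ℝ} : 0 ≤ tri x :=
  tsum_nonneg (fun n => by apply one_div_nonneg.2; positivity)
lemma S3_nonneg {x : ℝ} (hx : 0 < x) : 0 ≤ S3 x :=
  tsum_nonneg (fun n => le_of_lt (by have := den_pos hx n; positivity))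












noncomputable def Gup (z : ℝ) : ℝ := 1/z + 1/(2*z^2) + 1/(6*z^3)
noncomputable def Glo (z : ℝ) : ℝ := 1/z + 1/(2*z^2) + 1/(6*z^3) - 1/(30*z^5)
noncomputable def gl (x : ℝ) : ℝ := (x^2 + 12)/(12*x^4*(x+1)^2)
noncomputable def hup (x : ℝ) : ℝ := (x + 12)/(12*x^4*(x+1))
noncomputable def FF (x : ℝ) : ℝ := (tri x)^2 - 2 * S3 x

lemma Gup_step {t : ℝ} (ht : 0 < t) : 1/t^2 ≤ Gup t - Gup (t+1) := by
  have key : Gup t - Gup (t+1) - 1/t^2 = 1/(6*t^3*(t+1)^3) := by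
    unfold Gup; field_simp; ring
  nlinarith [one_div_pos.2 (show (0:ℝ) < 6*t^3*(t+1)^3 by positivity)]

lemma Glo_step {t : ℝ} (ht : 0 < t) : Glo t - Glo (t+1) ≤ 1/t^2 := by
  have key : 1/t^2 - (Glo t - Glo (t+1)) = (5*t^2+5*t+1)/(30*t^5*(t+1)^5) := by
    unfold Glo; field_simp; ring
  nlinarith [div_pos (show (0:ℝ) < 5*t^2+5*t+1 by positivity)
    (show (0:ℝ) < 30*t^5*(t+1)^5 by positivity)]

lemma Gup_nonneg {z : ℝ} (hz : 0 < z) : 0 ≤ Gup z := by unfold Gup; positivity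

lemma tri_le_Gup {z : ℝ} (hz : 0 < z) : tri z ≤ Gup z := by
  apply Real.tsum_le_of_sum_range_le (fun n => by have := den_pos hz n; positivity)
  intro N
  have tele : ∑ i ∈ range N, (Gup (z+i) - Gup (z+i+1)) = Gup z - Gup (z+N) := by
    have := Finset.sum_range_sub' (fun i : ℕ => Gup (z + i)) N
    simp only [Nat.cast_zero, add_zero, Nat.cast_add, Nat.cast_one] at this
    rw [← this]
    apply Finset.sum_congr rfl
    intro i _
    push_cast
    ring_nf
  calc ∑ i ∈ range N, 1/(z+i)^2 ≤ ∑ i ∈ range N, (Gup (z+i) - Gup (z+i+1)) := by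
        apply Finset.sum_le_sum
        intro i _
        exact Gup_step (den_pos hz i)
    _ = Gup z - Gup (z+N) := tele
    _ ≤ Gup z := by
        have : (0:ℝ) ≤ Gup (z + N) := Gup_nonneg (den_pos hz N)
        linarith

lemma tendsto_shift (z : ℝ) : Tendsto (fun N : ℕ => z + (N:ℝ)) atTop atTop :=
  tendsto_atTop_add_const_left _ z tendsto_natCast_atTop_atTop

lemma tendsto_Glo (z : ℝ) : Tendsto (fun N : ℕ => Glo (z + N)) atTop (𝓝 0) := by
  have h := tendsto_shift z
  have h1 : Tendsto (fun N : ℕ => 1/(z + N)) atTop (𝓝 0) := Tendsto.div_atTop tendsto_const_nhds h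
  have h2 : Tendsto (fun N : ℕ => 1/(2*(z + N)^2)) atTop (𝓝 0) :=
    Tendsto.div_atTop tendsto_const_nhds
      (Tendsto.const_mul_atTop two_pos ((tendsto_pow_atTop (by norm_num)).comp h))
  have h3 : Tendsto (fun N : ℕ => 1/(6*(z + N)^3)) atTop (𝓝 0) :=
    Tendsto.div_atTop tendsto_const_nhds
      (Tendsto.const_mul_atTop (by norm_num) ((tendsto_pow_atTop (by norm_num)).comp h))
  have h5 : Tendsto (fun N : ℕ => 1/(30*(z + N)^5)) atTop (𝓝 0) :=
    Tendsto.div_atTop tendsto_const_nhds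
      (Tendsto.const_mul_atTop (by norm_num) ((tendsto_pow_atTop (by norm_num)).comp h))
  have := ((h1.add h2).add h3).sub h5
  simpa [Glo] using this

lemma tendsto_Gup (z : ℝ) : Tendsto (fun N : ℕ => Gup (z + N)) atTop (𝓝 0) := by
  have h := tendsto_shift z
  have h1 : Tendsto (fun N : ℕ => 1/(z + N)) atTop (𝓝 0) := Tendsto.div_atTop tendsto_const_nhds h
  have h2 : Tendsto (fun N : ℕ => 1/(2*(z + N)^2)) atTop (𝓝 0) :=
    Tendsto.div_atTop tendsto_const_nhds
      (Tendsto.const_mul_atTop two_pos ((tendsto_pow_atTop (by norm_num)).comp h))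
  have h3 : Tendsto (fun N : ℕ => 1/(6*(z + N)^3)) atTop (𝓝 0) :=
    Tendsto.div_atTop tendsto_const_nhds
      (Tendsto.const_mul_atTop (by norm_num) ((tendsto_pow_atTop (by norm_num)).comp h))
  have := (h1.add h2).add h3
  simpa [Gup] using this

lemma Glo_le_tri {z : ℝ} (hz : 0 < z) : Glo z ≤ tri z := by
  have key : ∀ N : ℕ, Glo z - Glo (z + N) ≤ tri z := by
    intro N
    have tele : ∑ i ∈ range N, (Glo (z+i) - Glo (z+i+1)) = Glo z - Glo (z+N) := by
      have := Finset.sum_range_sub' (fun i : ℕ => Glo (z + i)) N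
      simp only [Nat.cast_zero, add_zero, Nat.cast_add, Nat.cast_one] at this
      rw [← this]
      apply Finset.sum_congr rfl
      intro i _
      push_cast
      ring_nf
    calc Glo z - Glo (z+N) = ∑ i ∈ range N, (Glo (z+i) - Glo (z+i+1)) := tele.symm
      _ ≤ ∑ i ∈ range N, 1/(z+i)^2 := by
          apply Finset.sum_le_sum
          intro i _
          exact Glo_step (den_pos hz i)
      _ ≤ tri z := Summable.sum_le_tsum _ (fun i _ => by have := den_pos hz i; positivity)
            (summable_tri hz)
  have hlim : Tendsto (fun N : ℕ => Glo z - Glo (z + N)) atTop (𝓝 (Glo z)) := by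
    have := (tendsto_const_nhds (x := Glo z) (f := atTop (α := ℕ))).sub (tendsto_Glo z)
    simpa using this
  exact le_of_tendsto' hlim key

lemma S3_le_tri {z : ℝ} (hz : 1 ≤ z) : S3 z ≤ tri z := by
  have hz0 : 0 < z := lt_of_lt_of_le one_pos hz
  apply Summable.tsum_le_tsum _ (summable_S3 hz0) (summable_tri hz0)
  intro n
  have h1 : (1:ℝ) ≤ z + n := le_trans hz (by have : (0:ℝ) ≤ n := Nat.cast_nonneg n; linarith)
  apply one_div_le_one_div_of_le (by positivity)
  calc (z+n)^2 = (z+n)^2 * 1 := by ring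
    _ ≤ (z+n)^2 * (z+n) := by nlinarith
    _ = (z+n)^3 := by ring

lemma tendsto_tri (x : ℝ) (hx : 0 < x) : Tendsto (fun N : ℕ => tri (x + N)) atTop (𝓝 0) := by
  apply tendsto_of_tendsto_of_tendsto_of_le_of_le' tendsto_const_nhds (tendsto_Gup x)
  · exact Eventually.of_forall (fun N => tri_nonneg)
  · exact Eventually.of_forall (fun N => tri_le_Gup (den_pos hx N))

lemma tendsto_S3 (x : ℝ) (hx : 0 < x) : Tendsto (fun N : ℕ => S3 (x + N)) atTop (𝓝 0) := by
  apply tendsto_of_tendsto_of_tendsto_of_le_of_le' tendsto_const_nhds (tendsto_tri x hx)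
  · exact Eventually.of_forall (fun N => S3_nonneg (den_pos hx N))
  · filter_upwards [eventually_ge_atTop 1] with N hN
    apply S3_le_tri
    have : (1:ℝ) ≤ N := by exact_mod_cast hN
    linarith

lemma tendsto_FF (x : ℝ) (hx : 0 < x) : Tendsto (fun N : ℕ => FF (x + N)) atTop (𝓝 0) := by
  have h := ((tendsto_tri x hx).pow 2).sub ((tendsto_S3 x hx).const_mul 2)
  simpa [FF] using h

lemma FF_rec {x : ℝ} (hx : 0 < x) :
    FF x = FF (x+1) + (2*tri (x+1)/x^2 + 1/x^4 - 2/x^3) := by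
  unfold FF
  rw [tri_rec hx, S3_rec hx]
  field_simp
  ring

lemma D_lt_up {y : ℝ} (hy : 0 < y) :
    2*tri (y+1)/y^2 + 1/y^4 - 2/y^3 < hup y - hup (y+1) := by
  have h1 : tri (y+1) ≤ Gup (y+1) := tri_le_Gup (by linarith)
  have key : hup y - hup (y+1) - (2*Gup (y+1)/y^2 + 1/y^4 - 2/y^3)
      = (45*y^3+59*y^2+26*y)/(12*y^4*(y+1)^4*(y+2)) := by
    unfold hup Gup; field_simp; ring
  have hpos : (0:ℝ) < (45*y^3+59*y^2+26*y)/(12*y^4*(y+1)^4*(y+2)) := by positivity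
  have h2 : 2*tri (y+1)/y^2 ≤ 2*Gup (y+1)/y^2 := by gcongr
  linarith

lemma D_gt_lo {y : ℝ} (hy : 0 < y) :
    gl y - gl (y+1) < 2*tri (y+1)/y^2 + 1/y^4 - 2/y^3 := by
  have h1 : Glo (y+1) ≤ tri (y+1) := Glo_le_tri (by linarith)
  have key : (2*Glo (y+1)/y^2 + 1/y^4 - 2/y^3) - (gl y - gl (y+1))
      = (100*y^6+296*y^5+340*y^4+188*y^3+44*y^2)/(60*y^4*(y+1)^6*(y+2)^2) := by
    unfold gl Glo; field_simp; ring
  have hpos : (0:ℝ) <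
      (100*y^6+296*y^5+340*y^4+188*y^3+44*y^2)/(60*y^4*(y+1)^6*(y+2)^2) := by positivity
  have h2 : 2*Glo (y+1)/y^2 ≤ 2*tri (y+1)/y^2 := by gcongr
  linarith

lemma FF_le_init {x : ℝ} (hx : 0 < x) (N : ℕ) :
    FF x ≤ hup x - hup (x + N) + FF (x + N) := by
  induction N with
  | zero => simp
  | succ N ih =>
    have hxN : 0 < x + N := den_pos hx N
    have h1 := FF_rec hxN
    have h2 := (D_lt_up hxN).le
    have hcast : x + (N+1 : ℕ) = (x + N) + 1 := by push_cast; ring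
    rw [hcast]
    linarith

lemma FF_ge_init {x : ℝ} (hx : 0 < x) (N : ℕ) :
    gl x - gl (x + N) + FF (x + N) ≤ FF x := by
  induction N with
  | zero => simp
  | succ N ih =>
    have hxN : 0 < x + N := den_pos hx N
    have h1 := FF_rec hxN
    have h2 := (D_gt_lo hxN).le
    have hcast : x + (N+1 : ℕ) = (x + N) + 1 := by push_cast; ring
    rw [hcast]
    linarith

lemma tendsto_hup (x : ℝ) (hx : 0 < x) : Tendsto (fun N : ℕ => hup (x + N)) atTop (𝓝 0) := by
  have h := tendsto_shift x
  have h13 : Tendsto (fun N : ℕ => 13/(x + N)) atTop (𝓝 0) :=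
    Tendsto.div_atTop tendsto_const_nhds h
  apply tendsto_of_tendsto_of_tendsto_of_le_of_le' tendsto_const_nhds h13
  · filter_upwards [eventually_ge_atTop 1] with N hN
    have hN1 : (1:ℝ) ≤ N := by exact_mod_cast hN
    have hz : (0:ℝ) < x + N := by linarith
    unfold hup; positivity
  · filter_upwards [eventually_ge_atTop 1] with N hN
    have hN1 : (1:ℝ) ≤ N := by exact_mod_cast hN
    have hz : (1:ℝ) ≤ x + N := by linarith
    have hz0 : (0:ℝ) < x + N := by linarith
    rw [hup, div_le_div_iff₀ (by positivity) (by positivity)]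
    nlinarith [pow_le_pow_right₀ hz (show 1 ≤ 4 by norm_num), sq_nonneg (x+N)]

lemma tendsto_gl (x : ℝ) (hx : 0 < x) : Tendsto (fun N : ℕ => gl (x + N)) atTop (𝓝 0) := by
  have h := tendsto_shift x
  have h13 : Tendsto (fun N : ℕ => 13/(x + N)) atTop (𝓝 0) :=
    Tendsto.div_atTop tendsto_const_nhds h
  apply tendsto_of_tendsto_of_tendsto_of_le_of_le' tendsto_const_nhds h13
  · filter_upwards [eventually_ge_atTop 1] with N hN
    have hN1 : (1:ℝ) ≤ N := by exact_mod_cast hN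
    have hz : (0:ℝ) < x + N := by linarith
    unfold gl; positivity
  · filter_upwards [eventually_ge_atTop 1] with N hN
    have hN1 : (1:ℝ) ≤ N := by exact_mod_cast hN
    have hz : (1:ℝ) ≤ x + N := by linarith
    have hz0 : (0:ℝ) < x + N := by linarith
    rw [gl, div_le_div_iff₀ (by positivity) (by positivity)]
    nlinarith [pow_le_pow_right₀ hz (show 2 ≤ 4 by norm_num), sq_nonneg (x+N),
      pow_pos hz0 4, pow_le_pow_right₀ hz (show 2 ≤ 6 by norm_num)]

lemma FF_le_hup {x : ℝ} (hx : 0 < x) : FF x ≤ hup x := by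
  have hlim : Tendsto (fun N : ℕ => hup x - hup (x + N) + FF (x + N)) atTop (𝓝 (hup x)) := by
    have := ((tendsto_const_nhds (x := hup x) (f := atTop (α := ℕ))).sub
      (tendsto_hup x hx)).add (tendsto_FF x hx)
    simpa using this
  exact ge_of_tendsto' hlim (FF_le_init hx)

lemma gl_le_FF {x : ℝ} (hx : 0 < x) : gl x ≤ FF x := by
  have hlim : Tendsto (fun N : ℕ => gl x - gl (x + N) + FF (x + N)) atTop (𝓝 (gl x)) := by
    have := ((tendsto_const_nhds (x := gl x) (f := atTop (α := ℕ))).sub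
      (tendsto_gl x hx)).add (tendsto_FF x hx)
    simpa using this
  exact le_of_tendsto' hlim (FF_ge_init hx)

lemma FF_lt_hup {x : ℝ} (hx : 0 < x) : FF x < hup x := by
  have h1 := FF_rec hx
  have h2 := D_lt_up hx
  have h3 := FF_le_hup (show (0:ℝ) < x + 1 by linarith)
  linarith

lemma gl_lt_FF {x : ℝ} (hx : 0 < x) : gl x < FF x := by
  have h1 := FF_rec hx
  have h2 := D_gt_lo hx
  have h3 := gl_le_FF (show (0:ℝ) < x + 1 by linarith)
  linarith









noncomputable def ftm (k : ℕ) (x : ℝ) : ℝ := 1/((k:ℝ)+1) - 1/(x+(k:ℝ)+1)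

noncomputable def psi0 (x : ℝ) : ℝ :=
  -eulerMascheroniConstant + -(1/x) + ∑' k : ℕ, ftm k x

noncomputable def Lf (n : ℕ) (x : ℝ) : ℝ :=
  x * Real.log n + Real.log (n.factorial : ℝ) - ∑ k ∈ Finset.range (n+1), Real.log (x + k)

noncomputable def Lf' (n : ℕ) (x : ℝ) : ℝ :=
  Real.log n - ∑ k ∈ Finset.range (n+1), 1/(x + k)

lemma hasDerivAt_Lf {n : ℕ} {x : ℝ} (hx : 0 < x) : HasDerivAt (Lf n) (Lf' n x) x := by
  have h1 : HasDerivAt (fun y : ℝ => y * Real.log n + Real.log (n.factorial : ℝ))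
      (Real.log n) x := (hasDerivAt_mul_const _).add_const _
  have h2 : HasDerivAt (fun y : ℝ => ∑ k ∈ Finset.range (n+1), Real.log (y + k))
      (∑ k ∈ Finset.range (n+1), 1/(x + k)) x := by
    apply HasDerivAt.fun_sum
    intro k _
    have hk : 0 < x + k := den_pos hx k
    have := ((hasDerivAt_id x).add_const (k:ℝ)).log hk.ne'
    simpa using this
  exact h1.sub h2

lemma ftm_eq {k : ℕ} {x : ℝ} (hx : 0 < x) :
    ftm k x = x / (((k:ℝ)+1) * (x+(k:ℝ)+1)) := by
  have h1 : (0:ℝ) < (k:ℝ)+1 := by positivity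
  have h2 : (0:ℝ) < x+(k:ℝ)+1 := by positivity
  rw [ftm]
  field_simp
  ring

lemma ftm_bound {k : ℕ} {x b : ℝ} (hx : 0 < x) (hxb : x ≤ b) :
    ‖ftm k x‖ ≤ b/((k:ℝ)+1)^2 := by
  have h1 : (0:ℝ) < (k:ℝ)+1 := by positivity
  have h2 : (0:ℝ) < x+(k:ℝ)+1 := by positivity
  rw [ftm_eq hx, norm_eq_abs, abs_of_nonneg (by positivity)]
  rw [div_le_div_iff₀ (by positivity) (by positivity)]
  have hb : (0:ℝ) ≤ b := le_trans hx.le hxb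
  calc x*((k:ℝ)+1)^2 ≤ b*((k:ℝ)+1)^2 := by gcongr
    _ = b*(((k:ℝ)+1)*((k:ℝ)+1)) := by ring
    _ ≤ b*(((k:ℝ)+1)*(x+(k:ℝ)+1)) := by gcongr; linarith

lemma summable_base : Summable (fun k : ℕ => 1/((k:ℝ)+1)^2) := by
  have := (summable_nat_add_iff (f := fun n : ℕ => 1 / (n : ℝ) ^ 2) 1).2
    (Real.summable_one_div_nat_pow.2 one_lt_two)
  simpa using this

lemma summable_ftm {x : ℝ} (hx : 0 < x) : Summable (fun k : ℕ => ftm k x) := by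
  have hbase : Summable (fun k : ℕ => x * (1/((k:ℝ)+1)^2)) := summable_base.mul_left x
  apply Summable.of_norm
  apply Summable.of_nonneg_of_le (fun k => norm_nonneg _) (fun k => ?_) hbase
  rw [mul_one_div]
  exact ftm_bound hx le_rfl

lemma harm_cast (n : ℕ) : ((harmonic n : ℚ) : ℝ) = ∑ k ∈ Finset.range n, 1/((k:ℝ)+1) := by
  rw [harmonic]
  push_cast
  simp [one_div]

lemma Lf'_decomp {n : ℕ} {x : ℝ} :
    Lf' n x = (Real.log n - ((harmonic n : ℚ) : ℝ)) + -(1/x)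
      + ∑ k ∈ Finset.range n, ftm k x := by
  have h1 : ∑ k ∈ Finset.range (n+1), 1/(x + (k:ℝ))
      = 1/x + ∑ k ∈ Finset.range n, 1/(x+(k:ℝ)+1) := by
    rw [Finset.sum_range_succ' (fun k : ℕ => 1/(x + (k:ℝ)))]
    push_cast
    rw [add_comm]
    congr 1
    · norm_num
    · apply Finset.sum_congr rfl
      intro k _
      ring_nf
  rw [Lf', h1, harm_cast]
  simp only [ftm]
  rw [Finset.sum_sub_distrib]
  ring

lemma tendsto_log_sub_harmonic :
    Tendsto (fun n : ℕ => Real.log n - ((harmonic n : ℚ) : ℝ)) atTop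
      (𝓝 (-eulerMascheroniConstant)) := by
  have := Real.tendsto_harmonic_sub_log.neg
  simpa [neg_sub] using this

lemma tuo_const_seq {c : ℕ → ℝ} {L : ℝ} (hc : Tendsto c atTop (𝓝 L)) (s : Set ℝ) :
    TendstoUniformlyOn (fun n (_ : ℝ) => c n) (fun _ => L) atTop s := by
  rw [Metric.tendstoUniformlyOn_iff]
  intro ε hε
  filter_upwards [Metric.tendsto_nhds.1 hc ε hε] with n hn x _
  rw [dist_comm] at hn
  exact hn

lemma tuo_self (w : ℝ → ℝ) (s : Set ℝ) :
    TendstoUniformlyOn (fun (_ : ℕ) x => w x) w atTop s := by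
  rw [Metric.tendstoUniformlyOn_iff]
  intro ε hε
  filter_upwards with n x _
  simpa using hε

lemma tlu_Lf' : TendstoLocallyUniformlyOn (fun n x => Lf' n x) psi0 atTop (Set.Ioi 0) := by
  rw [tendstoLocallyUniformlyOn_iff_forall_isCompact isOpen_Ioi]
  intro K hK hKc
  rcases K.eq_empty_or_nonempty with rfl | hne
  · exact tendstoUniformlyOn_empty
  have hb : BddAbove K := hKc.bddAbove
  set b := sSup K with hbdef
  have hKsub : K ⊆ Set.Ioc 0 b := fun y hy => ⟨hK hy, le_csSup hb hy⟩
  apply TendstoUniformlyOn.mono _ hKsub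
  have hsum : Summable (fun k : ℕ => b * (1/((k:ℝ)+1)^2)) := summable_base.mul_left b
  have t3 : TendstoUniformlyOn (fun N x => ∑ k ∈ Finset.range N, ftm k x)
      (fun x => ∑' k : ℕ, ftm k x) atTop (Set.Ioc 0 b) := by
    apply tendstoUniformlyOn_tsum_nat hsum
    intro k x hx
    rw [mul_one_div]
    exact ftm_bound hx.1 hx.2
  have t1 := tuo_const_seq tendsto_log_sub_harmonic (Set.Ioc 0 b)
  have t2 := tuo_self (fun x : ℝ => -(1/x)) (Set.Ioc 0 b)
  have h := (t1.add t2).add t3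
  have h2 := h.congr (F' := fun n x => Lf' n x) ?_
  · apply h2.congr_right
    intro x _
    rfl
  · filter_upwards with n x hx
    exact (Lf'_decomp).symm

lemma log_GammaSeq_eq {x : ℝ} (hx : 0 < x) {n : ℕ} (hn : 1 ≤ n) :
    Real.log (Real.GammaSeq x n) = Lf n x := by
  have hn0 : (0:ℝ) < n := by exact_mod_cast hn
  have hprod : ∀ j ∈ Finset.range (n+1), x + (j:ℝ) ≠ 0 := fun j _ => (den_pos hx j).ne'
  have hprodpos : (0:ℝ) < ∏ j ∈ Finset.range (n+1), (x + (j:ℝ)) :=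
    Finset.prod_pos (fun j _ => den_pos hx j)
  have hfac : (0:ℝ) < (n.factorial : ℝ) := by positivity
  rw [Real.GammaSeq, Real.log_div (by positivity) hprodpos.ne', Real.log_mul
    (by positivity) hfac.ne', Real.log_rpow hn0, Real.log_prod hprod, Lf]

lemma tendsto_Lf {x : ℝ} (hx : 0 < x) :
    Tendsto (fun n => Lf n x) atTop (𝓝 (Real.log (Real.Gamma x))) := by
  have h := ((Real.continuousAt_log (Real.Gamma_pos_of_pos hx).ne').tendsto).comp
    (Real.GammaSeq_tendsto_Gamma x)
  apply h.congr'
  filter_upwards [eventually_ge_atTop 1] with n hn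
  exact log_GammaSeq_eq hx hn

lemma hasDerivAt_logGamma {x : ℝ} (hx : 0 < x) :
    HasDerivAt (fun y => Real.log (Real.Gamma y)) (psi0 x) x := by
  exact hasDerivAt_of_tendstoLocallyUniformlyOn isOpen_Ioi tlu_Lf'
    (Eventually.of_forall (fun n y hy => hasDerivAt_Lf hy))
    (fun y hy => tendsto_Lf hy) hx

lemma digamma_eq {x : ℝ} (hx : 0 < x) : digamma x = psi0 x :=
  (hasDerivAt_logGamma hx).deriv

lemma hasDerivAt_ftm {k : ℕ} {y : ℝ} (hy : 0 < y) :
    HasDerivAt (fun z => ftm k z) (1/(y+(k:ℝ)+1)^2) y := by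
  have h2 : y+((k:ℝ)+1) ≠ 0 := by positivity
  have h := ((hasDerivAt_id y).add_const ((k:ℝ)+1)).fun_inv h2
  have h3 := (hasDerivAt_const y (1/((k:ℝ)+1))).fun_sub h
  have heq : (fun z : ℝ => ftm k z) = fun z : ℝ => 1/((k:ℝ)+1) - (id z+((k:ℝ)+1))⁻¹ := by
    funext z
    simp only [ftm, id_eq, one_div, add_assoc]
  rw [heq]
  refine h3.congr_deriv ?_
  simp only [id_eq, zero_sub, neg_div, neg_neg, ← add_assoc]

lemma hasDerivAt_psi0 {x : ℝ} (hx : 0 < x) : HasDerivAt psi0 (tri x) x := by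
  have hhalf : 0 < x/2 := by linarith
  have hT : HasDerivAt (fun z => ∑' k : ℕ, ftm k z) (∑' k : ℕ, 1/(x+(k:ℝ)+1)^2) x := by
    apply hasDerivAt_tsum_of_isPreconnected
      (u := fun k : ℕ => 1/((x/2+1)+(k:ℝ))^2) (summable_tri (by linarith))
      isOpen_Ioi isPreconnected_Ioi
      (fun k y hy => hasDerivAt_ftm (lt_trans hhalf hy))
      (fun k y hy => ?_) (Set.mem_Ioi.2 (by linarith : x/2 < x))
      (summable_ftm hx) (Set.mem_Ioi.2 (by linarith : x/2 < x))
    have hy0 : (0:ℝ) < y := lt_trans hhalf hy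
    have h1 : (0:ℝ) < y+(k:ℝ)+1 := by positivity
    have h2 : x/2+1+(k:ℝ) ≤ y+(k:ℝ)+1 := by
      have := Set.mem_Ioi.1 hy
      linarith
    rw [norm_eq_abs, abs_of_nonneg (by positivity)]
    apply one_div_le_one_div_of_le (by positivity)
    apply pow_le_pow_left₀ (by positivity) h2
  have hrest : HasDerivAt (fun z : ℝ => -eulerMascheroniConstant + -(1/z))
      ((x^2)⁻¹) x := by
    have := (hasDerivAt_inv hx.ne').fun_neg.const_add (-eulerMascheroniConstant)
    simpa only [one_div, neg_neg] using this
  have hsum := hrest.add hT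
  have heq : (x^2)⁻¹ + ∑' k : ℕ, 1/(x+(k:ℝ)+1)^2 = tri x := by
    rw [tri, Summable.tsum_eq_zero_add (summable_tri hx)]
    congr 1
    · norm_num
    · apply tsum_congr
      intro n
      push_cast
      ring_nf
  rw [heq] at hsum
  have hpsi : psi0 = fun z : ℝ => (-eulerMascheroniConstant + -(1/z)) + ∑' k : ℕ, ftm k z :=
    rfl
  rw [hpsi]
  exact hsum

lemma deriv_digamma_eq {x : ℝ} (hx : 0 < x) : deriv digamma x = tri x := by
  have hev : digamma =ᶠ[𝓝 x] psi0 := by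
    filter_upwards [isOpen_Ioi.mem_nhds (Set.mem_Ioi.2 hx)] with y hy
    exact digamma_eq (Set.mem_Ioi.1 hy)
  rw [hev.deriv_eq]
  exact (hasDerivAt_psi0 hx).deriv

lemma hasDerivAt_term2 {n : ℕ} {y : ℝ} (hy : 0 < y) :
    HasDerivAt (fun z : ℝ => 1/(z+(n:ℝ))^2) (-2/(y+(n:ℝ))^3) y := by
  have hn : (0:ℝ) < y + n := den_pos hy n
  have h := (((hasDerivAt_id y).add_const ((n:ℝ))).fun_pow 2).fun_inv (by simp only [id_eq]; positivity)
  have heq : (fun z : ℝ => 1/(z+(n:ℝ))^2) = fun z : ℝ => ((id z+(n:ℝ))^2)⁻¹ := by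
    funext z
    rw [one_div, id]
  rw [heq]
  refine h.congr_deriv ?_
  simp only [id_eq]
  field_simp
  ring

lemma hasDerivAt_tri {x : ℝ} (hx : 0 < x) : HasDerivAt tri (-2 * S3 x) x := by
  have hhalf : 0 < x/2 := by linarith
  have hT : HasDerivAt (fun z => ∑' n : ℕ, 1/(z+(n:ℝ))^2) (∑' n : ℕ, -2/(x+(n:ℝ))^3) x := by
    apply hasDerivAt_tsum_of_isPreconnected
      (u := fun n : ℕ => 2 * (1/((x/2)+(n:ℝ))^3)) ((summable_S3 hhalf).mul_left 2)
      isOpen_Ioi isPreconnected_Ioi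
      (fun n y hy => hasDerivAt_term2 (lt_trans hhalf hy))
      (fun n y hy => ?_) (Set.mem_Ioi.2 (by linarith : x/2 < x))
      (summable_tri hx) (Set.mem_Ioi.2 (by linarith : x/2 < x))
    have hy0 : (0:ℝ) < y := lt_trans hhalf hy
    have h1 : (0:ℝ) < y+(n:ℝ) := den_pos hy0 n
    have h2 : x/2+(n:ℝ) ≤ y+(n:ℝ) := by
      have := Set.mem_Ioi.1 hy
      linarith
    have h3 : (0:ℝ) < x/2+(n:ℝ) := den_pos hhalf n
    show ‖-2/(y+(n:ℝ))^3‖ ≤ 2 * (1/((x/2)+(n:ℝ))^3)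
    have habs : ‖-2/(y+(n:ℝ))^3‖ = 2/(y+(n:ℝ))^3 := by
      rw [norm_eq_abs, abs_div, abs_of_nonneg (by positivity : (0:ℝ) ≤ (y+(n:ℝ))^3)]
      norm_num
    rw [habs, mul_one_div, div_le_div_iff₀ (by positivity) (by positivity)]
    have := pow_le_pow_left₀ h3.le h2 3
    nlinarith
  have heq : tri = fun z => ∑' n : ℕ, 1/(z+(n:ℝ))^2 := rfl
  have heq2 : ∑' n : ℕ, -2/(x+(n:ℝ))^3 = -2 * S3 x := by
    rw [S3, ← tsum_mul_left]
    apply tsum_congr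
    intro n
    rw [mul_one_div]
  rw [heq, ← heq2]
  exact hT

lemma deriv2_digamma_eq {x : ℝ} (hx : 0 < x) : deriv (deriv digamma) x = -2 * S3 x := by
  have hev : deriv digamma =ᶠ[𝓝 x] tri := by
    filter_upwards [isOpen_Ioi.mem_nhds (Set.mem_Ioi.2 hx)] with y hy
    exact deriv_digamma_eq (Set.mem_Ioi.1 hy)
  rw [hev.deriv_eq]
  exact (hasDerivAt_tri hx).deriv


end PsiAux

theorem Psi_bounds (x : ℝ) (hx : 0 < x) :
    (x ^ 2 + 12) / (12 * x ^ 4 * (x + 1) ^ 2) <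
        (deriv digamma x) ^ 2 + deriv (deriv digamma) x ∧
      (deriv digamma x) ^ 2 + deriv (deriv digamma) x <
        (x + 12) / (12 * x ^ 4 * (x + 1)) := by
  rw [PsiAux.deriv_digamma_eq hx, PsiAux.deriv2_digamma_eq hx]
  have h1 := PsiAux.gl_lt_FF hx
  have h2 := PsiAux.FF_lt_hup hx
  rw [PsiAux.FF, PsiAux.gl] at h1
  rw [PsiAux.FF, PsiAux.hup] at h2
  constructor
  · linarith
  · linarith
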